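/- Let H be a finite-dimensional complex inner product space, let P_E and P_O be orthogonal projections on H with P_E + P_O = 1, let ψ, φ be unit vectors, and let p ∈ (0,1), q := 1 − p. Set Δ⁰ := p|ψ⟩⟨ψ| − q|φ⟩⟨φ| and M := |ψ⟩⟨ψ| + |φ⟩⟨φ|, and assume [Δ⁰, P_E] = 0. Let Π_ψ be an operator with 0 ≤ Π_ψ ≤ 1 achieving Tr[Π_ψ Δ⁰] = ½(‖Δ⁰‖₁ + Tr Δ⁰), and set Π_φ := 1 − Π_ψ. For ε ∈ ℝ with 0 ≤ p + ε ≤ 1, set Δ^ε := Δ⁰ + ε M (= (p+ε)|ψ⟩⟨ψ| − (q−ε)|φ⟩⟨φ|), Δ^ε_E := P_E Δ^ε P_E, Δ^ε_O := P_O Δ^ε P_O. Then the error excess δP_err := [(p+ε)⟪ψ, Π_φ ψ⟫ + (q−ε)⟪φ, Π_ψ φ⟫] − ½(1 − ‖Δ^ε_E + Δ^ε_O‖₁) satisfies δP_err ≤ k|ε| + g ε, with k := ½‖P_E M P_E + P_O M P_O‖₁ and g := ½ Tr[M(Π_φ − Π_ψ)]. -/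

import Mathlib

open Matrix
open scoped ComplexOrder Kronecker

/-- The trace norm `‖Y‖₁ = Tr √(Yᴴ Y)` of a complex matrix. -/
noncomputable def traceNorm {m : Type*} [Fintype m] [DecidableEq m]
    (Y : Matrix m m ℂ) : ℝ :=
  (((Matrix.posSemidef_conjTranspose_mul_self Y).1.eigenvectorUnitary : Matrix m m ℂ) *
      diagonal (((↑) : ℝ → ℂ) ∘ (√·) ∘ (Matrix.posSemidef_conjTranspose_mul_self Y).1.eigenvalues) *
      (star (Matrix.posSemidef_conjTranspose_mul_self Y).1.eigenvectorUnitary : Matrix m m ℂ)).trace.re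

/-- The inner product `⟪x, y⟫ = ∑ i, conj (x i) * y i` on `m → ℂ`. -/
noncomputable def cinner {m : Type*} [Fintype m] (x y : m → ℂ) : ℂ := star x ⬝ᵥ y

/-- An orthogonal projection: a self-adjoint idempotent matrix. -/
def IsOrthoProj {m : Type*} [Fintype m] (P : Matrix m m ℂ) : Prop :=
  P.IsHermitian ∧ P * P = P

/-- An effect: an operator `S` with `0 ≤ S ≤ 1`. -/
def IsEffect {m : Type*} [Fintype m] [DecidableEq m] (S : Matrix m m ℂ) : Prop :=
  S.PosSemidef ∧ (1 - S).PosSemidef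

/-- The rank-one operator `|ψ⟩⟨ψ|`. -/
noncomputable def outer {m : Type*} (ψ : m → ℂ) : Matrix m m ℂ :=
  Matrix.vecMulVec ψ (star ψ)

/-!
Because `P_E` commutes with `Δ⁰`, pinching by `{P_E, P_O}` leaves `Δ⁰` unchanged, so the pinched
perturbed operator is `Δ⁰ + ε (P_E M P_E + P_O M P_O)`, whose trace norm is at most
`‖Δ⁰‖₁ + 2k|ε|` by the triangle inequality. The triangle inequality for Hermitian matrices comes
from the dual description `‖X‖₁ = max {Re Tr (S X) | -1 ≤ S ≤ 1}`, the maximum being attained at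
the sign of `X`. On the other side, the error of `{Π_ψ, 1 - Π_ψ}` is `½ (1 - Re Tr ((2Π_ψ - 1) Δ^ε))`,
which the optimality of `Π_ψ` for `Δ⁰` turns into exactly `½ (1 - ‖Δ⁰‖₁) + g ε`.
-/

open scoped MatrixOrder

section TraceNorm

variable {m : Type*} [Fintype m] [DecidableEq m]

theorem traceNorm_eq_re_trace_abs (Y : Matrix m m ℂ) : traceNorm Y = (CFC.abs Y).trace.re := by
  have hY := posSemidef_conjTranspose_mul_self Y
  rw [CFC.abs, CFC.sqrt_eq_cfc, cfc_nnreal_eq_real _ _ (star_mul_self_nonneg Y),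
    star_eq_conjTranspose, hY.1.cfc_eq, IsHermitian.cfc, Unitary.conjStarAlgAut_apply, traceNorm]
  congr 5
  funext i
  simp [max_eq_left (hY.eigenvalues_nonneg i)]

theorem traceNorm_smul (r : ℂ) (Y : Matrix m m ℂ) : traceNorm (r • Y) = ‖r‖ * traceNorm Y := by
  rw [traceNorm_eq_re_trace_abs, traceNorm_eq_re_trace_abs, CFC.abs_smul, trace_smul]
  simp

theorem trace_mul_nonneg {A B : Matrix m m ℂ} (hA : 0 ≤ A) (hB : 0 ≤ B) :
    0 ≤ (A * B).trace := by
  rw [← CFC.sqrt_mul_sqrt_self B hB, ← Matrix.mul_assoc, trace_mul_cycle]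
  exact (nonneg_iff_posSemidef.1
    ((CFC.sqrt_nonneg B).isSelfAdjoint.conjugate_nonneg hA)).trace_nonneg

theorem re_trace_mul_le_traceNorm {X C : Matrix m m ℂ} (hX : X.IsHermitian) (hC₀ : -1 ≤ C)
    (hC₁ : C ≤ 1) : (C * X).trace.re ≤ traceNorm X := by
  have hpos : 0 ≤ ((1 - C) * X⁺).trace :=
    trace_mul_nonneg (sub_nonneg.2 hC₁) (CFC.posPart_nonneg X)
  have hneg : 0 ≤ ((C - -1) * X⁻).trace :=
    trace_mul_nonneg (sub_nonneg.2 hC₀) (CFC.negPart_nonneg X)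
  have hsplit : (CFC.abs X).trace - (C * X).trace
      = ((1 - C) * X⁺).trace + ((C - -1) * X⁻).trace := by
    calc (CFC.abs X).trace - (C * X).trace = (X⁺ + X⁻).trace - (C * (X⁺ - X⁻)).trace := by
          rw [CFC.posPart_add_negPart X hX, CFC.posPart_sub_negPart X hX]
      _ = ((1 - C) * X⁺).trace + ((C - -1) * X⁻).trace := by
          simp only [sub_mul, one_mul, neg_mul, mul_sub, trace_add, trace_sub, trace_neg]
          ring
  rw [traceNorm_eq_re_trace_abs, ← sub_nonneg, ← Complex.sub_re, hsplit]
  exact (Complex.nonneg_iff.1 (add_nonneg hpos hneg)).1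

theorem exists_re_trace_mul_eq_traceNorm {X : Matrix m m ℂ} (hX : X.IsHermitian) :
    ∃ S : Matrix m m ℂ, -1 ≤ S ∧ S ≤ 1 ∧ (S * X).trace.re = traceNorm X := by
  have hcont (f : ℝ → ℝ) : ContinuousOn f (spectrum ℝ X) :=
    (finite_real_spectrum (A := X)).continuousOn f
  refine ⟨cfc (fun x : ℝ ↦ (SignType.sign x : ℝ)) X, ?_, ?_, ?_⟩
  · simpa using algebraMap_le_cfc _ (-1) X (fun x _ ↦ by
      rcases lt_trichotomy x 0 with h | h | h <;> simp [h]) (hcont _)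
  · exact cfc_le_one _ X fun x _ ↦ by rcases lt_trichotomy x 0 with h | h | h <;> simp [h]
  · rw [traceNorm_eq_re_trace_abs, CFC.abs_eq_cfc_norm X hX]
    nth_rw 2 [← cfc_id' ℝ X]
    rw [← cfc_mul _ _ X (hcont _) (hcont _)]
    simp [sign_mul_self]

theorem traceNorm_add_le {X Y : Matrix m m ℂ} (hX : X.IsHermitian) (hY : Y.IsHermitian) :
    traceNorm (X + Y) ≤ traceNorm X + traceNorm Y := by
  obtain ⟨S, hS₀, hS₁, hS⟩ := exists_re_trace_mul_eq_traceNorm (hX.add hY)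
  rw [← hS, Matrix.mul_add, trace_add, Complex.add_re]
  exact add_le_add (re_trace_mul_le_traceNorm hX hS₀ hS₁) (re_trace_mul_le_traceNorm hY hS₀ hS₁)

end TraceNorm

theorem IsIdempotentElem.pinch_add_smul {S R : Type*} [CommRing S] [Ring R] [Algebra S R]
    {P A : R} (hP : IsIdempotentElem P) (hPA : Commute P A) (c : S) (B : R) :
    P * (A + c • B) * P + (1 - P) * (A + c • B) * (1 - P)
      = A + c • (P * B * P + (1 - P) * B * (1 - P)) := by
  have hPAP : P * A * P = P * A := by rw [mul_assoc, ← hPA.eq, ← mul_assoc, hP.eq]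
  have hA : P * A * P + (1 - P) * A * (1 - P) = A :=
    calc P * A * P + (1 - P) * A * (1 - P) = A - P * A - A * P + 2 * (P * A * P) := by
          noncomm_ring
      _ = A := by rw [hPAP, hPA.eq]; noncomm_ring
  simp only [mul_add, add_mul, mul_smul_comm, smul_mul_assoc, smul_add]
  conv_rhs => rw [← hA]
  abel

section StateDiscrimination

variable {m : Type*} [Fintype m]

theorem isHermitian_outer (v : m → ℂ) : (outer v).IsHermitian :=
  (posSemidef_vecMulVec_self_star v).isHermitian

theorem trace_mul_outer (X : Matrix m m ℂ) (v : m → ℂ) :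
    (X * outer v).trace = cinner v (X *ᵥ v) := by
  simp only [outer, cinner, trace, diag, mul_apply, vecMulVec_apply, dotProduct, mulVec,
    Pi.star_apply, Finset.mul_sum]
  exact Finset.sum_congr rfl fun i _ ↦ Finset.sum_congr rfl fun j _ ↦ by ring

variable [DecidableEq m] {ψ φ : m → ℂ}

theorem re_cinner_one_sub_mulVec (hψ : cinner ψ ψ = 1) (A : Matrix m m ℂ) :
    (cinner ψ ((1 - A) *ᵥ ψ)).re = 1 - (cinner ψ (A *ᵥ ψ)).re := by
  have hψ' : star ψ ⬝ᵥ ψ = 1 := hψ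
  simp [cinner, sub_mulVec, dotProduct_sub, hψ']

theorem error_eq_half_one_sub_re_trace (hψ : cinner ψ ψ = 1) (hφ : cinner φ φ = 1) {p q : ℝ}
    (hpq : p + q = 1) (A : Matrix m m ℂ) :
    p * (cinner ψ ((1 - A) *ᵥ ψ)).re + q * (cinner φ (A *ᵥ φ)).re
      = (1 - ((A - (1 - A)) * ((p : ℂ) • outer ψ - (q : ℂ) • outer φ)).trace.re) / 2 := by
  have hψ' := trace_mul_outer (1 : Matrix m m ℂ) ψ
  have hφ' := trace_mul_outer (1 : Matrix m m ℂ) φ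
  simp only [one_mul, one_mulVec, hψ, hφ] at hψ' hφ'
  simp only [mul_sub, Matrix.mul_smul, sub_mul, one_mul, trace_sub, trace_smul, trace_mul_outer,
    hψ', hφ', re_cinner_one_sub_mulVec hψ, smul_eq_mul, Complex.sub_re, Complex.re_ofReal_mul,
    Complex.one_re]
  linear_combination hpq / 2

theorem error_eq_of_optimal (hψ : cinner ψ ψ = 1) (hφ : cinner φ φ = 1) {p q : ℝ}
    (hpq : p + q = 1) (ε : ℝ) {Δ0 M A : Matrix m m ℂ}
    (hΔ0 : Δ0 = (p : ℂ) • outer ψ - (q : ℂ) • outer φ) (hM : M = outer ψ + outer φ)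
    (hopt : ((A * Δ0).trace).re = (traceNorm Δ0 + Δ0.trace.re) / 2) :
    (p + ε) * (cinner ψ ((1 - A) *ᵥ ψ)).re + (q - ε) * (cinner φ (A *ᵥ φ)).re
      = (1 - traceNorm Δ0) / 2 + ((M * ((1 - A) - A)).trace).re / 2 * ε := by
  have hΔε : ((p + ε : ℝ) : ℂ) • outer ψ - ((q - ε : ℝ) : ℂ) • outer φ = Δ0 + (ε : ℂ) • M := by
    rw [hΔ0, hM]; push_cast; module
  rw [error_eq_half_one_sub_re_trace hψ hφ (by linarith) A, hΔε, trace_mul_comm M]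
  simp only [mul_add, Matrix.mul_smul, sub_mul, one_mul, trace_add, trace_sub, trace_smul,
    smul_eq_mul, Complex.add_re, Complex.sub_re, Complex.re_ofReal_mul]
  linear_combination -hopt

end StateDiscrimination

theorem perturbation_error_excess_bound_general
    {n : ℕ} (P_E P_O : Matrix (Fin n) (Fin n) ℂ)
    (hPE : IsOrthoProj P_E) (hsum : P_E + P_O = 1)
    (ψ φ : Fin n → ℂ) (hψ : cinner ψ ψ = 1) (hφ : cinner φ φ = 1)
    (p q : ℝ) (hq : q = 1 - p)
    (Δ0 M : Matrix (Fin n) (Fin n) ℂ)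
    (hΔ0 : Δ0 = (p : ℂ) • outer ψ - (q : ℂ) • outer φ)
    (hM : M = outer ψ + outer φ)
    (hcomm : Δ0 * P_E = P_E * Δ0)
    (Pψ Pφ : Matrix (Fin n) (Fin n) ℂ)
    (hopt : ((Pψ * Δ0).trace).re = (traceNorm Δ0 + Δ0.trace.re) / 2)
    (hPφ : Pφ = 1 - Pψ)
    (ε : ℝ)
    (Δε : Matrix (Fin n) (Fin n) ℂ) (hΔε : Δε = Δ0 + (ε : ℂ) • M)
    (k g : ℝ)
    (hk : k = traceNorm (P_E * M * P_E + P_O * M * P_O) / 2)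
    (hg : g = ((M * (Pφ - Pψ)).trace).re / 2) :
    ((p + ε) * (cinner ψ (Pφ.mulVec ψ)).re + (q - ε) * (cinner φ (Pψ.mulVec φ)).re) -
        (1 - traceNorm (P_E * Δε * P_E + P_O * Δε * P_O)) / 2 ≤
      k * |ε| + g * ε := by
  obtain rfl : P_O = 1 - P_E := eq_sub_of_add_eq' hsum
  subst hΔε hPφ hk hg
  have hΔ0h : Δ0.IsHermitian := hΔ0 ▸
    ((isHermitian_outer ψ).smul (Complex.conj_ofReal p)).sub
      ((isHermitian_outer φ).smul (Complex.conj_ofReal q))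
  have hMh : M.IsHermitian := hM ▸ (isHermitian_outer ψ).add (isHermitian_outer φ)
  have hMpinch : (P_E * M * P_E + (1 - P_E) * M * (1 - P_E)).IsHermitian :=
    (IsSelfAdjoint.conjugate_self hMh hPE.1).add
      (IsSelfAdjoint.conjugate_self hMh (isHermitian_one.sub hPE.1))
  have hnorm := traceNorm_add_le hΔ0h (hMpinch.smul (Complex.conj_ofReal ε))
  rw [traceNorm_smul, Complex.norm_real, Real.norm_eq_abs] at hnorm
  rw [IsIdempotentElem.pinch_add_smul hPE.2 hcomm.symm,
    error_eq_of_optimal hψ hφ (by linarith) ε hΔ0 hM hopt]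
  linarith

/-- **Perturbation bound (Eq. (13)).** The excess error of the POVM optimized for the
unperturbed prior, relative to the optimal LOCC error for the perturbed prior, is bounded
by `k|ε| + gε`. -/
theorem perturbation_error_excess_bound
    {n : ℕ} (P_E P_O : Matrix (Fin n) (Fin n) ℂ)
    (hPE : IsOrthoProj P_E) (hPO : IsOrthoProj P_O) (hsum : P_E + P_O = 1)
    (ψ φ : Fin n → ℂ) (hψ : cinner ψ ψ = 1) (hφ : cinner φ φ = 1)
    (p q : ℝ) (hp : p ∈ Set.Ioo (0 : ℝ) 1) (hq : q = 1 - p)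
    (Δ0 M : Matrix (Fin n) (Fin n) ℂ)
    (hΔ0 : Δ0 = (p : ℂ) • outer ψ - (q : ℂ) • outer φ)
    (hM : M = outer ψ + outer φ)
    (hcomm : Δ0 * P_E = P_E * Δ0)
    (Pψ Pφ : Matrix (Fin n) (Fin n) ℂ) (hPψ : IsEffect Pψ)
    (hopt : ((Pψ * Δ0).trace).re = (traceNorm Δ0 + Δ0.trace.re) / 2)
    (hPφ : Pφ = 1 - Pψ)
    (ε : ℝ) (hε0 : 0 ≤ p + ε) (hε1 : p + ε ≤ 1)
    (Δε : Matrix (Fin n) (Fin n) ℂ) (hΔε : Δε = Δ0 + (ε : ℂ) • M)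
    (k g : ℝ)
    (hk : k = traceNorm (P_E * M * P_E + P_O * M * P_O) / 2)
    (hg : g = ((M * (Pφ - Pψ)).trace).re / 2) :
    ((p + ε) * (cinner ψ (Pφ.mulVec ψ)).re + (q - ε) * (cinner φ (Pψ.mulVec φ)).re) -
        (1 - traceNorm (P_E * Δε * P_E + P_O * Δε * P_O)) / 2 ≤
      k * |ε| + g * ε :=
  perturbation_error_excess_bound_general P_E P_O hPE hsum ψ φ hψ hφ p q hq Δ0 M hΔ0 hM hcomm Pψ Pφ
    hopt hPφ ε Δε hΔε k g hk hg
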